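/- Let Λ be a left and right noetherian ring, n a non-negative integer, and X a finitely generated left Λ-module. If grade X ≥ n and grade Extⁿ_Λ(X, Λ) ≥ n+1, then Extⁿ_Λ(X, Λ) = 0. -/

import Mathlib

open CategoryTheory
open scoped DirectSum

noncomputable section

variable (R : Type) [Ring R]

/-- The evaluation map from a module to its double dual. -/
def evalDD (M : Type) [AddCommGroup M] [Module R M] :
    M →ₗ[R] ((M →ₗ[R] R) →ₗ[Rᵐᵒᵖ] R) where
  toFun x :=
    { toFun := fun f => f x
      map_add' := fun f g => rfl
      map_smul' := fun r f => rfl }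
  map_add' x y := by ext f; simp
  map_smul' a x := by ext f; simp

variable {R} in
/-- The dual of a linear map between left modules, as a map of right modules. -/
def dualMap {M N : Type} [AddCommGroup M] [Module R M] [AddCommGroup N] [Module R N]
    (f : M →ₗ[R] N) : (N →ₗ[R] R) →ₗ[Rᵐᵒᵖ] (M →ₗ[R] R) where
  toFun g := g.comp f
  map_add' g h := by ext; simp
  map_smul' r g := by ext; simp

/-- The contravariant duality functor `Hom_R(-, R)` from left `R`-modules to right `R`-modules. -/
def dualFunctor : ModuleCat.{0} R ⥤ (ModuleCat.{0} Rᵐᵒᵖ)ᵒᵖ where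
  obj M := Opposite.op (ModuleCat.of Rᵐᵒᵖ (M →ₗ[R] R))
  map f := (ModuleCat.ofHom (dualMap f.hom)).op
  map_id M := by
    apply Quiver.Hom.unop_inj
    ext g
    rfl
  map_comp f g := by
    apply Quiver.Hom.unop_inj
    ext h
    rfl

instance : (dualFunctor R).Additive where
  map_add {M N f g} := by
    apply Quiver.Hom.unop_inj
    rw [unop_add]
    show ModuleCat.ofHom (dualMap (f + g).hom) = ModuleCat.ofHom (dualMap f.hom) + ModuleCat.ofHom (dualMap g.hom)
    ext (h : ↑N →ₗ[R] R) x
    show h ((f + g).hom x) = h (f.hom x) + h (g.hom x)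
    show h (f.hom x + g.hom x) = h (f.hom x) + h (g.hom x)
    exact map_add h (f.hom x) (g.hom x)

/-- `Ext^n_R(M, R)` as a right `R`-module, computed from a projective resolution of `M`. -/
def extMod (n : ℕ) (M : ModuleCat.{0} R) : ModuleCat.{0} Rᵐᵒᵖ :=
  ((((dualFunctor R).mapHomologicalComplex _).obj
    (ProjectiveResolution.of M).complex).unop).homology n

/-- Vanishing of `Ext^n_R(M, R)`. -/
def extVanish (n : ℕ) (M : Type) [AddCommGroup M] [Module R M] : Prop :=
  Subsingleton (extMod R n (ModuleCat.of R M))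

/-- `grade M ≥ t` : `Ext^i_R(M, R) = 0` for all `i < t`. -/
def gradeGE (M : Type) [AddCommGroup M] [Module R M] (t : ℕ) : Prop :=
  ∀ i, i < t → extVanish R i M

/-- `grade M = k`. -/
def gradeEq (M : Type) [AddCommGroup M] [Module R M] (k : ℕ) : Prop :=
  gradeGE R M k ∧ ¬ extVanish R k M

/-- `grade M = ∞` : all `Ext^i_R(M, R)` vanish. -/
def gradeInf (M : Type) [AddCommGroup M] [Module R M] : Prop :=
  ∀ i, extVanish R i M

/-- `s.grade M ≥ t` : every non-zero submodule has grade at least `t`. -/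
def sgradeGE (M : Type) [AddCommGroup M] [Module R M] (t : ℕ) : Prop :=
  ∀ A : Submodule R M, A ≠ ⊥ → gradeGE R A t

/-- `M` is pure of grade `k` : `M` is non-zero and every non-zero submodule has grade
exactly `k`. -/
def pureGrade (M : Type) [AddCommGroup M] [Module R M] (k : ℕ) : Prop :=
  Nontrivial M ∧ ∀ A : Submodule R M, A ≠ ⊥ → gradeEq R A k

/-- The character module `Hom_ℤ(M, ℚ/ℤ)` of a module. -/
abbrev CharMod (M : Type) [AddCommGroup M] : Type := M →+ AddCircle (1 : ℚ)

/-- The right `R`-module structure on the character module of a left `R`-module. -/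
instance (M : Type) [AddCommGroup M] [Module R M] : Module Rᵐᵒᵖ (CharMod M) where
  smul r f := (f : M →+ AddCircle (1 : ℚ)).comp (DistribSMul.toAddMonoidHom M r.unop)
  one_smul f := by
    refine AddMonoidHom.ext fun x => ?_
    show f ((1 : R) • x) = f x
    rw [one_smul]
  mul_smul r s f := by
    refine AddMonoidHom.ext fun x => ?_
    show f ((s.unop * r.unop) • x) = f (s.unop • r.unop • x)
    rw [mul_smul]
  smul_zero r := by
    refine AddMonoidHom.ext fun x => ?_
    show (0 : M →+ AddCircle (1 : ℚ)) (r.unop • x) = 0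
    rfl
  smul_add r f g := by
    refine AddMonoidHom.ext fun x => ?_
    show (f + g : M →+ AddCircle (1 : ℚ)) (r.unop • x) = f (r.unop • x) + g (r.unop • x)
    rfl
  add_smul r s f := by
    refine AddMonoidHom.ext fun x => ?_
    show f ((r.unop + s.unop) • x) = f (r.unop • x) + f (s.unop • x)
    rw [add_smul, map_add]
  zero_smul f := by
    refine AddMonoidHom.ext fun x => ?_
    show f ((0 : R) • x) = 0
    rw [zero_smul, map_zero]

/-- A left `R`-module is flat iff its character module is an injective right `R`-module
(Lambek's characterization, here taken as the definition valid over noncommutative rings). -/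
def IsFlatMod (M : Type) [AddCommGroup M] [Module R M] : Prop :=
  Module.Injective Rᵐᵒᵖ (CharMod M)

/-- The flat dimension of `M` is at most `n` : there is a flat resolution of `M`
concentrated in degrees `≤ n`. -/
def flatDimLE (M : ModuleCat.{0} R) (n : ℕ) : Prop :=
  ∃ (F : ChainComplex (ModuleCat.{0} R) ℕ) (π : F ⟶ (ChainComplex.single₀ _).obj M),
    (∀ i, IsFlatMod R (F.X i)) ∧ (∀ i, n < i → Subsingleton (F.X i)) ∧ QuasiIso π

/-- The projective dimension of `M` is at most `n`. -/
def projDimLE (M : ModuleCat.{0} R) (n : ℕ) : Prop :=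
  ∃ (F : ChainComplex (ModuleCat.{0} R) ℕ) (π : F ⟶ (ChainComplex.single₀ _).obj M),
    (∀ i, Projective (F.X i)) ∧ (∀ i, n < i → Subsingleton (F.X i)) ∧ QuasiIso π

/-- The injective dimension of `M` is at most `n` : there is an injective resolution of `M`
concentrated in degrees `≤ n`. -/
def injDimLE (M : ModuleCat.{0} R) (n : ℕ) : Prop :=
  ∃ (F : CochainComplex (ModuleCat.{0} R) ℕ) (ι : (CochainComplex.single₀ _).obj M ⟶ F),
    (∀ i, Injective (F.X i)) ∧ (∀ i, n < i → Subsingleton (F.X i)) ∧ QuasiIso ι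

/-- The injective dimension of `M` is exactly `n`. -/
def injDimEq (M : ModuleCat.{0} R) (n : ℕ) : Prop :=
  injDimLE R M n ∧ ∀ m, injDimLE R M m → n ≤ m

/-- The small (left) finitistic dimension of `R` is at most `k`. -/
def finDimLE (k : ℕ) : Prop :=
  ∀ M : ModuleCat.{0} R, Module.Finite R M → (∃ n, projDimLE R M n) → projDimLE R M k

/-- The small (left) finitistic dimension of `R` is exactly `k`. -/
def finDimEq (k : ℕ) : Prop :=
  finDimLE R k ∧ ∀ m, finDimLE R m → k ≤ m

/-- A minimal injective resolution `0 → R → I 0 → I 1 → ⋯` of `R` as a module over itself. -/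
structure MinInjRes where
  I : ℕ → Type
  acg : ∀ n, AddCommGroup (I n)
  mod : ∀ n, Module R (I n)
  ι : R →ₗ[R] I 0
  d : ∀ n, I n →ₗ[R] I (n + 1)
  injective : ∀ n, Module.Injective R (I n)
  mono : Function.Injective ι
  exact0 : Function.Exact ι (d 0)
  exact : ∀ n, Function.Exact (d n) (d (n + 1))
  /-- Minimality: the kernel of each differential is an essential submodule. -/
  essential : ∀ n (K : Submodule R (I n)), K ⊓ LinearMap.ker (d n) = ⊥ → K = ⊥

attribute [instance] MinInjRes.acg MinInjRes.mod

/-- The socle (largest semisimple submodule) of a module is non-zero, i.e. the module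
contains a simple submodule. -/
def socleNeZero (M : Type) [AddCommGroup M] [Module R M] : Prop :=
  ∃ S : Submodule R M, IsSimpleModule R S

variable {R} in
/-- The transpose of a module with projective presentation `P₁ —f→ P₀ → M → 0` :
the cokernel of the dualized map `P₀* → P₁*`, a right `R`-module. -/
abbrev transposeOf {P1 P0 : Type} [AddCommGroup P1] [Module R P1] [AddCommGroup P0] [Module R P0]
    (f : P1 →ₗ[R] P0) : Type :=
  (P1 →ₗ[R] R) ⧸ LinearMap.range (dualMap f)

/-- `M` is a `k`-torsionfree module : for every finite projective presentation of `M`,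
the transpose `X` satisfies `Ext^i(X, R) = 0` for `1 ≤ i ≤ k`. -/
def isTorsionfree (k : ℕ) (M : Type) [AddCommGroup M] [Module R M] : Prop :=
  ∀ (P1 P0 : ModuleCat.{0} R), Projective P1 → Module.Finite R P1 →
    Projective P0 → Module.Finite R P0 →
    ∀ (f : P1 →ₗ[R] P0) (g : P0 →ₗ[R] M), Function.Surjective g → Function.Exact f g →
      ∀ i, 1 ≤ i → i ≤ k → extVanish Rᵐᵒᵖ i (transposeOf f)

/-- `M` is a `k`-syzygy module : there is an exact sequence
`0 → M → Q₀ → ⋯ → Q_{k-1}` with all `Qᵢ` finitely generated projective. -/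
def isSyzygy : (k : ℕ) → (M : Type) → [AddCommGroup M] → [Module R M] → Prop
  | 0, _M, _, _ => True
  | (k + 1), M, _, _ => ∃ Q : ModuleCat.{0} R, Projective Q ∧ Module.Finite R Q ∧
      ∃ f : M →ₗ[R] Q, Function.Injective f ∧ isSyzygy k (Q ⧸ LinearMap.range f)

/-- The canonical ring homomorphism `R →+* Rᵐᵒᵖᵐᵒᵖ`. -/
def opOpHom : R →+* Rᵐᵒᵖᵐᵒᵖ where
  toFun a := MulOpposite.op (MulOpposite.op a)
  map_one' := rfl
  map_mul' _ _ := rfl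
  map_zero' := rfl
  map_add' _ _ := rfl

/-- `Ext^n_R(N, R)` of a right `R`-module `N`, as a left `R`-module (restricting scalars
along the canonical identification `R ≅ Rᵐᵒᵖᵐᵒᵖ`). -/
def extModL (n : ℕ) (N : ModuleCat.{0} Rᵐᵒᵖ) : Type := extMod Rᵐᵒᵖ n N

instance (n : ℕ) (N : ModuleCat.{0} Rᵐᵒᵖ) : AddCommGroup (extModL R n N) :=
  inferInstanceAs (AddCommGroup (extMod Rᵐᵒᵖ n N))

instance (n : ℕ) (N : ModuleCat.{0} Rᵐᵒᵖ) : Module R (extModL R n N) :=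
  Module.compHom (extMod Rᵐᵒᵖ n N) (opOpHom R)

/-- A module is torsionless if the evaluation map into its double dual is injective. -/
def Torsionless (M : Type) [AddCommGroup M] [Module R M] : Prop :=
  Function.Injective (evalDD R M)

/-- A non-zero module is uniform if each of its non-zero submodules is essential. -/
def IsUniform (M : Type) [AddCommGroup M] [Module R M] : Prop :=
  Nontrivial M ∧ ∀ A : Submodule R M, A ≠ ⊥ → ∀ B : Submodule R M, A ⊓ B = ⊥ → B = ⊥

/-- An indecomposable module: non-zero, and admitting no non-trivial direct sum
decomposition. -/
def IsIndecomposableMod (M : Type) [AddCommGroup M] [Module R M] : Prop :=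
  Nontrivial M ∧ ∀ A B : Submodule R M, IsCompl A B → A = ⊥ ∨ B = ⊥

/-- `N` embeds into a finite direct sum of copies of `E`. -/
def embedsInFinSum (N : Type) [AddCommGroup N] [Module R N]
    (E : Type) [AddCommGroup E] [Module R E] : Prop :=
  ∃ (n : ℕ) (φ : N →ₗ[R] (Fin n → E)), Function.Injective φ

end

namespace ExtAux
open CategoryTheory

variable {S : Type} [Ring S]

lemma subsingleton_of_isZero {M : ModuleCat.{0} S} (h : Limits.IsZero M) : Subsingleton M := by
  refine subsingleton_of_forall_eq 0 (fun x => ?_)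
  have h1 : (𝟙 M : M ⟶ M) = 0 := h.eq_of_src _ _
  calc x = (𝟙 M : M ⟶ M) x := rfl
  _ = (0 : M ⟶ M) x := by rw [h1]
  _ = 0 := rfl

variable {c : ComplexShape ℕ} (K : HomologicalComplex (ModuleCat.{0} S) c)

/-- concrete description of homology -/
structure CH (p n q : ℕ) where
  π : LinearMap.ker (K.d n q).hom →ₗ[S] K.homology n
  surj : Function.Surjective π
  ker_eq : ∀ z : LinearMap.ker (K.d n q).hom, π z = 0 ↔ (z : K.X n) ∈ LinearMap.range (K.d p n).hom

noncomputable def mkCH (p n q : ℕ) (hpn : c.prev n = p) (hnq : c.next n = q) : CH K p n q := by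
  let Sc := K.sc' p n q
  let e : Sc.moduleCatLeftHomologyData.H ≃ₗ[S] K.homology n :=
    (CategoryTheory.Iso.toLinearEquiv (Sc.moduleCatHomologyIso.symm ≪≫ (K.homologyIsoSc' p n q hpn hnq).symm)).symm.symm
  have hmk : ∀ z : LinearMap.ker (K.d n q).hom,
      Sc.moduleCatLeftHomologyData.π.hom z = 0 ↔ (z : K.X n) ∈ LinearMap.range (K.d p n).hom := by
    intro z
    show Submodule.mkQ _ z = 0 ↔ _
    refine (Submodule.Quotient.mk_eq_zero _ (x := z)).trans ?_
    constructor
    · rintro ⟨y, rfl⟩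
      exact ⟨y, rfl⟩
    · rintro ⟨y, hy⟩
      exact ⟨y, Subtype.ext hy⟩
  refine ⟨(e : Sc.moduleCatLeftHomologyData.H →ₗ[S] K.homology n).comp Sc.moduleCatLeftHomologyData.π.hom, ?_, ?_⟩
  · exact e.surjective.comp (Submodule.mkQ_surjective _)
  · intro z
    show e (Sc.moduleCatLeftHomologyData.π.hom z) = 0 ↔ _
    constructor
    · intro hz
      have h0 : Sc.moduleCatLeftHomologyData.π.hom z = 0 := by
        apply e.injective
        rw [map_zero]
        exact hz
      exact (hmk z).1 h0
    · intro hz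
      have h0 := (hmk z).2 hz
      show e (Sc.moduleCatLeftHomologyData.π.hom z) = 0
      rw [h0, map_zero]

lemma subsingleton_homology_iff (p n q : ℕ) (hpn : c.prev n = p) (hnq : c.next n = q) :
    Subsingleton (K.homology n) ↔
      ∀ z : K.X n, K.d n q z = 0 → z ∈ LinearMap.range (K.d p n).hom := by
  obtain ⟨π, surj, ker_eq⟩ := mkCH K p n q hpn hnq
  constructor
  · intro hs z hz
    exact (ker_eq ⟨z, hz⟩).1 (Subsingleton.elim _ _)
  · intro h
    refine subsingleton_of_forall_eq 0 (fun x => ?_)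
    obtain ⟨z, rfl⟩ := surj x
    exact (ker_eq z).2 (h z z.2)

end ExtAux
namespace ExtAux
open CategoryTheory

section Res
variable {S : Type} [Ring S] {N : ModuleCat.{0} S} (P : ProjectiveResolution N)

noncomputable def resEps : P.complex.X 0 →ₗ[S] N :=
  ((HomologicalComplex.singleObjXSelf (ComplexShape.down ℕ) 0 N).toLinearEquiv : _ →ₗ[S] _).comp (P.π.f 0).hom

lemma resEps_surj : Function.Surjective (resEps P) :=
  (HomologicalComplex.singleObjXSelf (ComplexShape.down ℕ) 0 N).toLinearEquiv.surjective.comp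
    ((ModuleCat.epi_iff_surjective (P.π.f 0)).1 inferInstance)

lemma resEps_ker : LinearMap.ker (resEps P) = LinearMap.range (P.complex.d 1 0).hom := by
  have h1 : LinearMap.ker (resEps P) = LinearMap.ker (P.π.f 0).hom := by
    rw [resEps, LinearMap.ker_comp, LinearEquiv.ker, Submodule.comap_bot]
  rw [h1]
  exact (ShortComplex.moduleCat_exact_iff_range_eq_ker _).1 P.exact₀ |>.symm

lemma res_exact (j : ℕ) :
    LinearMap.ker (P.complex.d (j+1) j).hom =
      LinearMap.range (P.complex.d (j+2) (j+1)).hom := by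
  exact ((ShortComplex.moduleCat_exact_iff_range_eq_ker _).1 (P.exact_succ j)).symm

lemma res_proj (i : ℕ) : Module.Projective S (P.complex.X i) := by
  rw [IsProjective.iff_projective]
  exact P.projective i

end Res

section Shape
lemma symm_rel (i : ℕ) : (ComplexShape.down ℕ).symm.Rel i (i+1) := by
  show (ComplexShape.down ℕ).Rel (i+1) i
  simp [ComplexShape.down_Rel]

lemma symm_next (i : ℕ) : (ComplexShape.down ℕ).symm.next i = i + 1 :=
  ComplexShape.next_eq' _ (symm_rel i)

lemma symm_prev_succ (i : ℕ) : (ComplexShape.down ℕ).symm.prev (i+1) = i :=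
  ComplexShape.prev_eq' _ (symm_rel i)

lemma symm_prev_zero : (ComplexShape.down ℕ).symm.prev 0 = 0 := by
  unfold ComplexShape.prev
  rw [dif_neg]
  rintro ⟨i, hi⟩
  simp [ComplexShape.symm, ComplexShape.down_Rel] at hi

lemma symm_prev (i : ℕ) : (ComplexShape.down ℕ).symm.prev i = i - 1 := by
  cases i with
  | zero => exact symm_prev_zero
  | succ j => exact symm_prev_succ j

end Shape
end ExtAux
namespace ExtAux
open CategoryTheory

section EZ
variable {A : Type} [Ring A] {N : ModuleCat.{0} A} (Q : ProjectiveResolution N)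

/-- Elementary vanishing of `Ext^(i+1)(N, M)` computed via the resolution `Q`. -/
def ez (i : ℕ) (M : Type) [AddCommGroup M] [Module A M] : Prop :=
  ∀ f : Q.complex.X (i+1) →ₗ[A] M, (∀ x, f (Q.complex.d (i+2) (i+1) x) = 0) →
    ∃ g : Q.complex.X i →ₗ[A] M, ∀ x, f x = g (Q.complex.d (i+1) i x)

variable {Q}

lemma ez_of_subsingleton (i : ℕ) (M : Type) [AddCommGroup M] [Module A M]
    [hs : Subsingleton M] : ez Q i M :=
  fun _ _ => ⟨0, fun _ => Subsingleton.elim _ _⟩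

lemma ez_equiv {i : ℕ} {M M' : Type} [AddCommGroup M] [Module A M] [AddCommGroup M']
    [Module A M'] (e : M ≃ₗ[A] M') (h : ez Q i M) : ez Q i M' := by
  intro f hf
  obtain ⟨g, hg⟩ := h ((e.symm : M' →ₗ[A] M).comp f)
    (fun x => by simp only [LinearMap.comp_apply, hf x, map_zero])
  refine ⟨(e : M →ₗ[A] M').comp g, fun x => ?_⟩
  have h1 := hg x
  simp only [LinearMap.comp_apply, LinearEquiv.coe_coe] at h1 ⊢
  rw [← h1, LinearEquiv.apply_symm_apply]

lemma ez_retract {i : ℕ} {M M' : Type} [AddCommGroup M] [Module A M] [AddCommGroup M']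
    [Module A M'] (r : M →ₗ[A] M') (sec : M' →ₗ[A] M) (hrs : ∀ m, r (sec m) = m)
    (h : ez Q i M) : ez Q i M' := by
  intro f hf
  obtain ⟨g, hg⟩ := h (sec.comp f) (fun x => by simp only [LinearMap.comp_apply, hf x, map_zero])
  refine ⟨r.comp g, fun x => ?_⟩
  have h1 := hg x
  simp only [LinearMap.comp_apply] at h1 ⊢
  rw [← h1, hrs]

lemma ez_pi {i : ℕ} {M : Type} [AddCommGroup M] [Module A M] (κ : Type)
    (h : ez Q i M) : ez Q i (κ → M) := by
  intro f hf
  have hcomp : ∀ b : κ, ∃ g : Q.complex.X i →ₗ[A] M,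
      ∀ x, f x b = g (Q.complex.d (i+1) i x) := by
    intro b
    exact h ((LinearMap.proj b).comp f)
      (fun x => by simp only [LinearMap.comp_apply, hf x, LinearMap.proj_apply]; rfl)
  choose gs hgs using hcomp
  exact ⟨LinearMap.pi gs, fun x => funext fun b => hgs b x⟩

lemma ez_step {i : ℕ} {A' G B : Type} [AddCommGroup A'] [Module A A'] [AddCommGroup G]
    [Module A G] [AddCommGroup B] [Module A B]
    (ι : A' →ₗ[A] G) (hι : Function.Injective ι)
    (pr : G →ₗ[A] B) (hpr : Function.Surjective pr)
    (hker : LinearMap.ker pr = LinearMap.range ι)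
    (hProj : Module.Projective A (Q.complex.X (i+1)))
    (hA : ez Q (i+1) A') (hG : ez Q i G) : ez Q i B := by
  intro f hf
  obtain ⟨ft, hft'⟩ := Module.projective_lifting_property pr f hpr
  have hft : ∀ x, pr (ft x) = f x := fun x => LinearMap.congr_fun hft' x
  set h0 : Q.complex.X (i+2) →ₗ[A] G := ft.comp (Q.complex.d (i+2) (i+1)).hom with hh0
  have hmem : ∀ x, h0 x ∈ LinearMap.range ι := by
    intro x
    rw [← hker, LinearMap.mem_ker]
    show pr (ft (Q.complex.d (i+2) (i+1) x)) = 0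
    rw [hft, hf]
  let eA := LinearEquiv.ofInjective ι hι
  let h1 : Q.complex.X (i+2) →ₗ[A] A' :=
    (eA.symm : _ →ₗ[A] A').comp (LinearMap.codRestrict (LinearMap.range ι) h0 hmem)
  have hιh1 : ∀ x, ι (h1 x) = h0 x := by
    intro x
    show ι (eA.symm ⟨h0 x, hmem x⟩) = h0 x
    have h2 : ∀ y : LinearMap.range ι, ι (eA.symm y) = (y : G) := by
      intro y
      conv_rhs => rw [← eA.apply_symm_apply y]
      rfl
    rw [h2]
  have hcocycle : ∀ x, h1 (Q.complex.d (i+3) (i+2) x) = 0 := by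
    intro x
    apply hι
    rw [hιh1, map_zero]
    show ft (Q.complex.d (i+2) (i+1) (Q.complex.d (i+3) (i+2) x)) = 0
    have hdd : (Q.complex.d (i+2) (i+1)) ((Q.complex.d (i+3) (i+2)) x) = 0 := by
      have := Q.complex.d_comp_d (i+3) (i+2) (i+1)
      calc (Q.complex.d (i+2) (i+1)) ((Q.complex.d (i+3) (i+2)) x)
          = (Q.complex.d (i+3) (i+2) ≫ Q.complex.d (i+2) (i+1)) x := rfl
        _ = (0 : Q.complex.X (i+3) ⟶ Q.complex.X (i+1)) x := by rw [this]
        _ = 0 := rfl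
    rw [hdd, map_zero]
  obtain ⟨h', hh'⟩ := hA h1 hcocycle
  have hf2c : ∀ x, (ft - ι.comp h') (Q.complex.d (i+2) (i+1) x) = 0 := by
    intro x
    simp only [LinearMap.sub_apply, LinearMap.comp_apply]
    rw [← hh' x, hιh1]
    show ft ((Q.complex.d (i+2) (i+1)) x) - ft ((Q.complex.d (i+2) (i+1)) x) = 0
    exact sub_self _
  obtain ⟨u, hu⟩ := hG (ft - ι.comp h') hf2c
  refine ⟨pr.comp u, fun x => ?_⟩
  have h4 := hu x
  simp only [LinearMap.sub_apply, LinearMap.comp_apply] at h4 ⊢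
  have h5 : pr (ι (h' x)) = 0 := by
    have h7 : ι (h' x) ∈ LinearMap.ker pr := by rw [hker]; exact ⟨h' x, rfl⟩
    exact h7
  rw [← h4, map_sub, h5, hft, sub_zero]

end EZ
end ExtAux
namespace ExtAux
open CategoryTheory

section Split
variable {A : Type} [Ring A] {N : ModuleCat.{0} A} (Q : ProjectiveResolution N)

lemma split_of_ez {Zm : Type} [AddCommGroup Zm] [Module A Zm]
    (πh : Zm →ₗ[A] N) (hsurj : Function.Surjective πh)
    (Bsub : Submodule A Zm) (hker : ∀ z, πh z = 0 ↔ z ∈ Bsub)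
    (hez : ez Q 0 Bsub) :
    ∃ s : N →ₗ[A] Zm, ∀ t, πh (s t) = t := by
  obtain ⟨σ, hσ'⟩ := Module.projective_lifting_property πh (resEps Q) hsurj
    (h := res_proj Q 0)
  have hσ : ∀ x, πh (σ x) = resEps Q x := fun x => LinearMap.congr_fun hσ' x
  have hd10 : ∀ x : Q.complex.X 1, resEps Q (Q.complex.d 1 0 x) = 0 := by
    intro x
    have h1 : (Q.complex.d 1 0 x : Q.complex.X 0) ∈ LinearMap.ker (resEps Q) := by
      rw [resEps_ker]; exact ⟨x, rfl⟩
    exact h1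
  have hmem : ∀ x : Q.complex.X 1, σ (Q.complex.d 1 0 x) ∈ Bsub := by
    intro x
    exact (hker _).1 (by rw [hσ, hd10])
  set h : Q.complex.X 1 →ₗ[A] Bsub :=
    LinearMap.codRestrict Bsub (σ.comp (Q.complex.d 1 0).hom) hmem with hh
  have hc : ∀ x : Q.complex.X 2, h (Q.complex.d 2 1 x) = 0 := by
    intro x
    apply Subtype.ext
    show σ (Q.complex.d 1 0 (Q.complex.d 2 1 x)) = 0
    have hdd : (Q.complex.d 1 0) ((Q.complex.d 2 1) x) = 0 := by
      have h2 := Q.complex.d_comp_d 2 1 0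
      calc (Q.complex.d 1 0) ((Q.complex.d 2 1) x)
          = (Q.complex.d 2 1 ≫ Q.complex.d 1 0) x := rfl
        _ = (0 : Q.complex.X 2 ⟶ Q.complex.X 0) x := by rw [h2]
        _ = 0 := rfl
    rw [hdd, map_zero]
  obtain ⟨g, hg⟩ := hez h hc
  set τ : Q.complex.X 0 →ₗ[A] Zm := σ - Bsub.subtype.comp g with hτ
  have hτd : ∀ x : Q.complex.X 1, τ (Q.complex.d 1 0 x) = 0 := by
    intro x
    simp only [hτ, LinearMap.sub_apply, LinearMap.comp_apply, Submodule.coe_subtype]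
    rw [← hg x]
    show σ ((Q.complex.d 1 0) x) - σ ((Q.complex.d 1 0) x) = 0
    exact sub_self _
  have hπτ : ∀ y, πh (τ y) = resEps Q y := by
    intro y
    simp only [hτ, LinearMap.sub_apply, LinearMap.comp_apply, Submodule.coe_subtype]
    rw [map_sub, hσ, (hker _).2 (g y).2, sub_zero]
  have hcongr : ∀ a b : Q.complex.X 0, resEps Q a = resEps Q b → τ a = τ b := by
    intro a b hab
    have h3 : a - b ∈ LinearMap.ker (resEps Q) := by
      rw [LinearMap.mem_ker, map_sub, hab, sub_self]
    rw [resEps_ker] at h3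
    obtain ⟨c, hc'⟩ := h3
    have h4 : τ (a - b) = 0 := by rw [← hc', hτd]
    rw [map_sub] at h4
    exact sub_eq_zero.1 h4
  have hsurjE := resEps_surj Q
  set inv := Function.surjInv hsurjE with hinv
  have hEinv : ∀ t, resEps Q (inv t) = t := fun t => Function.surjInv_eq hsurjE t
  refine ⟨{ toFun := fun t => τ (inv t),
            map_add' := ?_, map_smul' := ?_ }, ?_⟩
  · intro a b
    have h8 : τ (inv (a + b)) = τ (inv a + inv b) :=
      hcongr _ _ (by rw [hEinv, map_add, hEinv, hEinv])
    show τ (inv (a + b)) = τ (inv a) + τ (inv b)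
    rw [h8, map_add]
  · intro c a
    have h8 : τ (inv (c • a)) = τ (c • inv a) :=
      hcongr _ _ (by rw [hEinv, map_smul, hEinv])
    show τ (inv (c • a)) = c • τ (inv a)
    rw [h8, map_smul]
  · intro t
    show πh (τ (inv t)) = t
    rw [hπτ, hEinv]

end Split

section DualCoeff
variable (R : Type) [Ring R]

/-- `Hom_R(R, R) ≃ Rᵐᵒᵖ` as right modules. -/
def endEquiv : (R →ₗ[R] R) ≃ₗ[Rᵐᵒᵖ] Rᵐᵒᵖ where
  toFun f := MulOpposite.op (f 1)
  map_add' f g := by simp [MulOpposite.op_add]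
  map_smul' c f := by
    simp only [LinearMap.smul_apply, RingHom.id_apply]
    rw [MulOpposite.smul_eq_mul_unop, MulOpposite.op_mul, MulOpposite.op_unop]
    rfl
  invFun a :=
    { toFun := fun x => x * a.unop
      map_add' := fun x y => add_mul x y _
      map_smul' := fun r x => by simp only [smul_eq_mul, RingHom.id_apply, mul_assoc]
      }
  left_inv f := by
    refine LinearMap.ext fun x => ?_
    show x * f 1 = f x
    rw [← smul_eq_mul, ← map_smul, smul_eq_mul, mul_one]
  right_inv a := by
    show MulOpposite.op ((1:R) * a.unop) = a
    rw [one_mul, MulOpposite.op_unop]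

variable {N : ModuleCat.{0} Rᵐᵒᵖ} {Q : ProjectiveResolution N}

/-- If `Ext^{i+1}(N, Rᵐᵒᵖ) = 0` then `Ext^{i+1}(N, W*) = 0` for any projective left module `W`. -/
lemma ez_dual {i : ℕ} (W : Type) [AddCommGroup W] [Module R W] (hW : Module.Projective R W)
    (hreg : ez Q i Rᵐᵒᵖ) : ez Q i (W →ₗ[R] R) := by
  -- step 1: Hom(W →₀ R, R) ≃ (W → Rᵐᵒᵖ)
  let e1 : ((W →₀ R) →ₗ[R] R) ≃ₗ[Rᵐᵒᵖ] (W → (R →ₗ[R] R)) := (Finsupp.lsum Rᵐᵒᵖ).symm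
  let e3 : ((W →₀ R) →ₗ[R] R) ≃ₗ[Rᵐᵒᵖ] (W → Rᵐᵒᵖ) :=
    e1.trans (LinearEquiv.piCongrRight (fun _ => endEquiv R))
  have h2 : ez Q i ((W →₀ R) →ₗ[R] R) := ez_equiv e3.symm (ez_pi W hreg)
  -- step 2: W* is a retract of Hom(W →₀ R, R)
  obtain ⟨sW, hsW⟩ := (Module.projective_def').1 hW
  refine ez_retract (dualMap sW) (dualMap (Finsupp.linearCombination R id)) ?_ h2
  intro g
  refine LinearMap.ext fun w => ?_
  show g ((Finsupp.linearCombination R id) (sW w)) = g w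
  have hx : (Finsupp.linearCombination R id) (sW w) = w := LinearMap.congr_fun hsW w
  rw [hx]

end DualCoeff
end ExtAux

/-- If `grade X ≥ n` and `grade Extⁿ(X, Λ) ≥ n + 1`, then `Extⁿ(X, Λ) = 0`. -/
theorem ext_vanish_of_grade (Λ : Type) [Ring Λ] [IsNoetherianRing Λ] [IsNoetherianRing Λᵐᵒᵖ]
    (n : ℕ) (X : Type) [AddCommGroup X] [Module Λ X] [Module.Finite Λ X]
    (h1 : gradeGE Λ X n)
    (h2 : gradeGE Λᵐᵒᵖ (extMod Λ n (ModuleCat.of Λ X)) (n + 1)) :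
    extVanish Λ n X := by
  classical
  show Subsingleton (extMod Λ n (ModuleCat.of Λ X))
  -- the dual complex of the chosen projective resolution of X
  set P : ProjectiveResolution (ModuleCat.of Λ X) := ProjectiveResolution.of (ModuleCat.of Λ X)
    with hP
  set K : HomologicalComplex (ModuleCat.{0} Λᵐᵒᵖ) ((ComplexShape.down ℕ).symm) :=
    (((dualFunctor Λ).mapHomologicalComplex _).obj P.complex).unop with hK
  show Subsingleton (K.homology n)
  -- concrete exactness facts from h1
  have hshape00 : K.d 0 0 = 0 := by
    apply K.shape
    show ¬ (ComplexShape.down ℕ).Rel 0 0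
    simp [ComplexShape.down_Rel]
  have hex0 : 0 < n → ∀ z : K.X 0, K.d 0 1 z = 0 → z = 0 := by
    intro hn z hz
    have h3 := (ExtAux.subsingleton_homology_iff K 0 0 1 ExtAux.symm_prev_zero
      (ExtAux.symm_next 0)).1 (h1 0 hn) z hz
    obtain ⟨y, hy⟩ := h3
    rw [← hy, hshape00]
    rfl
  have hexS : ∀ i, i + 1 < n → ∀ z : K.X (i+1), K.d (i+1) (i+2) z = 0 →
      ∃ y : K.X i, K.d i (i+1) y = z := by
    intro i hi z hz
    exact (ExtAux.subsingleton_homology_iff K i (i+1) (i+2) (ExtAux.symm_prev_succ i)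
      (ExtAux.symm_next (i+1))).1 (h1 (i+1) hi) z hz
  -- concrete homology at n
  obtain ⟨πh, hsurj, hker⟩ := ExtAux.mkCH K (n-1) n (n+1) (ExtAux.symm_prev n)
    (ExtAux.symm_next n)
  -- the resolution of Ext^n
  set NT : ModuleCat.{0} Λᵐᵒᵖ := ModuleCat.of Λᵐᵒᵖ (extMod Λ n (ModuleCat.of Λ X)) with hNT
  set Q : ProjectiveResolution NT := ProjectiveResolution.of NT with hQ
  set KQ : HomologicalComplex (ModuleCat.{0} Λᵐᵒᵖᵐᵒᵖ) ((ComplexShape.down ℕ).symm) :=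
    (((dualFunctor Λᵐᵒᵖ).mapHomologicalComplex _).obj Q.complex).unop with hKQ
  have h2' : ∀ i, i < n + 1 → Subsingleton (KQ.homology i) := fun i hi => h2 i hi
  -- h2 gives elementary Ext-vanishing statements for Q
  have hEZ : ∀ i, i + 1 ≤ n → ExtAux.ez Q i Λᵐᵒᵖ := by
    intro i hi
    intro f hf
    have h3 := (ExtAux.subsingleton_homology_iff KQ i (i+1) (i+2) (ExtAux.symm_prev_succ i)
      (ExtAux.symm_next (i+1))).1 (h2' (i+1) (by omega)) f
      (by
        show (f.comp (Q.complex.d (i+2) (i+1)).hom) = (0 : ↑(KQ.X (i+2)))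
        exact LinearMap.ext fun x => hf x)
    obtain ⟨y, hy⟩ := h3
    exact ⟨y, fun x => (LinearMap.congr_fun hy x).symm⟩
  have hHom0 : ∀ φ : Q.complex.X 0 →ₗ[Λᵐᵒᵖ] Λᵐᵒᵖ,
      (∀ x : Q.complex.X 1, φ (Q.complex.d 1 0 x) = 0) → φ = 0 := by
    intro φ hφ
    have h3 := (ExtAux.subsingleton_homology_iff KQ 0 0 1 ExtAux.symm_prev_zero
      (ExtAux.symm_next 0)).1 (h2' 0 (by omega)) φ
      (by
        show (φ.comp (Q.complex.d 1 0).hom) = (0 : ↑(KQ.X 1))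
        exact LinearMap.ext fun x => hφ x)
    obtain ⟨y, hy⟩ := h3
    have h4 : KQ.d 0 0 = 0 := by
      apply KQ.shape
      show ¬ (ComplexShape.down ℕ).Rel 0 0
      simp [ComplexShape.down_Rel]
    rw [← hy, h4]
    rfl
  -- d ∘ d = 0 pointwise
  have hdd : ∀ (a b c : ℕ) (y : K.X a), K.d b c (K.d a b y) = 0 := by
    intro a b c y
    calc K.d b c (K.d a b y) = (K.d a b ≫ K.d b c) y := rfl
      _ = (0 : K.X a ⟶ K.X c) y := by rw [K.d_comp_d]
      _ = 0 := rfl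
  -- the chain of coefficient modules
  have hchain : ∀ i, i + 1 ≤ n →
      ExtAux.ez Q (n - i - 1)
        ↥(LinearMap.range (K.d i (i+1)).hom) := by
    intro i
    induction i with
    | zero =>
      intro hi
      have hinj : Function.Injective (K.d 0 1).hom := by
        intro a b hab
        have h5 : (K.d 0 1) (a - b) = 0 := by rw [map_sub, sub_eq_zero]; exact hab
        exact sub_eq_zero.1 (hex0 (by omega) _ h5)
      have hez := ExtAux.ez_dual Λ (P.complex.X 0) (ExtAux.res_proj P 0)
        (hEZ (n - 0 - 1) (by omega))
      exact ExtAux.ez_equiv (LinearEquiv.ofInjective _ hinj) hez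
    | succ i ih =>
      intro hi
      have ihez := ih (by omega)
      have e : n - i - 1 = n - (i+1) - 1 + 1 := by omega
      rw [e] at ihez
      refine ExtAux.ez_step (Submodule.subtype _) (Submodule.injective_subtype _)
        ((K.d (i+1) (i+2)).hom.rangeRestrict)
        (LinearMap.surjective_rangeRestrict _) ?_ (ExtAux.res_proj Q _) ihez ?_
      · rw [LinearMap.ker_rangeRestrict, Submodule.range_subtype]
        apply le_antisymm
        · intro z hz
          exact hexS i (by omega) z hz
        · rintro z ⟨y, rfl⟩
          show (K.d (i+1) (i+2)) ((K.d i (i+1)) y) = 0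
          exact hdd _ _ _ y
      · exact ExtAux.ez_dual Λ (P.complex.X (i+1)) (ExtAux.res_proj P (i+1))
          (hEZ (n - (i+1) - 1) (by omega))
  -- the bottom submodule and the splitting
  have hBZ : LinearMap.range (K.d (n-1) n).hom ≤
      LinearMap.ker (K.d n (n+1)).hom := by
    rintro z ⟨y, rfl⟩
    show (K.d n (n+1)) ((K.d (n-1) n) y) = 0
    exact hdd _ _ _ y
  set Bsub : Submodule Λᵐᵒᵖ ↥(LinearMap.ker (K.d n (n+1)).hom) :=
    Submodule.comap (LinearMap.ker (K.d n (n+1)).hom).subtype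
      (LinearMap.range (K.d (n-1) n).hom) with hBsub
  have hkerB : ∀ z, πh z = 0 ↔ z ∈ Bsub := by
    intro z
    rw [hker z]
    exact Iff.rfl
  have hez0B : ExtAux.ez Q 0 ↥Bsub := by
    rcases Nat.eq_zero_or_pos n with hn | hn
    · subst hn
      have hsub : Subsingleton ↥Bsub := by
        constructor
        rintro ⟨⟨a, ha⟩, hma⟩ ⟨⟨b, hb⟩, hmb⟩
        have hzero : ∀ w : ↑(K.X 0), w ∈ LinearMap.range
            (K.d (0-1) 0).hom → w = 0 := by
          rintro w ⟨y, rfl⟩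
          show (K.d 0 0) y = 0
          rw [hshape00]
          rfl
        refine Subtype.ext (Subtype.ext ?_)
        show a = b
        rw [hzero a hma, hzero b hmb]
      exact ExtAux.ez_of_subsingleton 0 _
    · obtain ⟨j, rfl⟩ : ∃ j, n = j + 1 := ⟨n-1, by omega⟩
      have hch := hchain j (by omega)
      have e : (j+1) - j - 1 = 0 := by omega
      rw [e] at hch
      exact ExtAux.ez_equiv (Submodule.comapSubtypeEquivOfLe hBZ).symm hch
  obtain ⟨s, hs⟩ := ExtAux.split_of_ez Q πh hsurj Bsub hkerB hez0B
  -- conclude: every element of the homology is zero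
  refine subsingleton_of_forall_eq 0 (fun t => ?_)
  let val : ↥(LinearMap.ker (K.d n (n+1)).hom) →
      (P.complex.X n →ₗ[Λ] Λ) := fun z => z.1
  have hval0 : ∀ x : P.complex.X n, (val (s t)) x = 0 := by
    intro x
    let φ : ↑NT →ₗ[Λᵐᵒᵖ] Λᵐᵒᵖ :=
      { toFun := fun u => MulOpposite.op ((val (s u)) x)
        map_add' := by
          intro u v
          have h5 : val (s (u+v)) = val (s u) + val (s v) := by rw [map_add]; rfl
          show MulOpposite.op ((val (s (u+v))) x) = _
          rw [h5]
          show MulOpposite.op ((val (s u)) x + (val (s v)) x) = _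
          rw [MulOpposite.op_add]
        map_smul' := by
          intro c u
          have h5 : val (s (c • u)) = c • val (s u) := by rw [map_smul]; rfl
          show MulOpposite.op ((val (s (c • u))) x) = _
          rw [h5]
          show MulOpposite.op ((val (s u)) x * c.unop) = c * MulOpposite.op ((val (s u)) x)
          rw [MulOpposite.op_mul, MulOpposite.op_unop] }
    have hφzero : φ = 0 := by
      have hcoc : ∀ y : Q.complex.X 1,
          (φ.comp (ExtAux.resEps Q)) (Q.complex.d 1 0 y) = 0 := by
        intro y
        have h6 : ExtAux.resEps Q (Q.complex.d 1 0 y) = 0 := by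
          have h7 : (Q.complex.d 1 0 y : Q.complex.X 0) ∈
              LinearMap.ker (ExtAux.resEps Q) := by
            rw [ExtAux.resEps_ker]
            exact ⟨y, rfl⟩
          exact h7
        show φ (ExtAux.resEps Q (Q.complex.d 1 0 y)) = 0
        rw [h6, map_zero]
      have h8 := hHom0 (φ.comp (ExtAux.resEps Q)) hcoc
      refine LinearMap.ext fun u => ?_
      obtain ⟨w, rfl⟩ := ExtAux.resEps_surj Q u
      have h9 := LinearMap.congr_fun h8 w
      exact h9
    have h10 : φ t = 0 := by rw [hφzero]; rfl
    have h11 : MulOpposite.op ((val (s t)) x) = 0 := h10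
    exact MulOpposite.op_injective h11
  have hstz : s t = 0 := by
    apply Subtype.ext
    show val (s t) = 0
    exact LinearMap.ext fun x => hval0 x
  calc t = πh (s t) := (hs t).symm
    _ = πh 0 := by rw [hstz]
    _ = 0 := map_zero πh
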